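/- arXiv:1210.8129 — 2 statements merged into one kernel-verified Lean document; each statement's English description precedes it below -/
import Mathlib

section
/- Suppose the analysis and synthesis spectral kernels satisfy ĥ₁(λ) = ĝ₀(2−λ) and ĝ₁(λ) = ĥ₀(2−λ) for all λ ∈ [0,2]. Then the two perfect reconstruction conditions ĝ₀(λ)ĥ₀(λ) + ĝ₁(λ)ĥ₁(λ) = 2 and ĝ₀(λ)ĥ₀(2−λ) − ĝ₁(λ)ĥ₁(2−λ) = 0 both hold for all λ ∈ [0,2] if and only if ĥ₀(λ)ĝ₀(λ) + ĥ₀(2−λ)ĝ₀(2−λ) = 2 for all λ ∈ [0,2]. -/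
/-- With `ĥ₁(λ) = ĝ₀(2−λ)` and `ĝ₁(λ) = ĥ₀(2−λ)` on `[0,2]`, the two perfect
reconstruction conditions hold on `[0,2]` iff the single half-band condition
`ĥ₀(λ)ĝ₀(λ) + ĥ₀(2−λ)ĝ₀(2−λ) = 2` holds on `[0,2]`. -/
theorem biorthogonal_PR_reduction (h0 h1 g0 g1 : ℝ → ℝ)
    (hh1 : ∀ lam ∈ Set.Icc (0:ℝ) 2, h1 lam = g0 (2 - lam))
    (hg1 : ∀ lam ∈ Set.Icc (0:ℝ) 2, g1 lam = h0 (2 - lam)) :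
    ((∀ lam ∈ Set.Icc (0:ℝ) 2,
        g0 lam * h0 lam + g1 lam * h1 lam = 2 ∧
        g0 lam * h0 (2 - lam) - g1 lam * h1 (2 - lam) = 0) ↔
      (∀ lam ∈ Set.Icc (0:ℝ) 2,
        h0 lam * g0 lam + h0 (2 - lam) * g0 (2 - lam) = 2)) := by
  constructor
  · intro H lam hlam
    obtain ⟨h1', h2'⟩ := H lam hlam
    rw [hg1 lam hlam, hh1 lam hlam] at h1'
    linarith
  · intro H lam hlam
    have hlam' : (2 - lam) ∈ Set.Icc (0:ℝ) 2 := by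
      simp only [Set.mem_Icc] at hlam ⊢; constructor <;> linarith [hlam.1, hlam.2]
    have key := H lam hlam
    have e1 := hg1 lam hlam
    have e2 := hh1 lam hlam
    have e3 := hh1 (2 - lam) hlam'
    rw [show (2 - (2 - lam)) = lam by ring] at e3
    constructor
    · rw [e1, e2]; linarith
    · rw [e1, e3]; ring
end

section
/- There is no real polynomial h such that p(λ) := h(λ)² satisfies p(λ) + p(2−λ) = 2 for all λ, unless h is constant with h² = 1. In particular, exact graph-QMF lowpass kernels (ĝ₀ = ĥ₀) cannot be polynomials. -/
/-- If a real polynomial `h` satisfies `h(λ)² + h(2−λ)² = 2` for all `λ`, then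
`h` is a constant with `h² = 1`: exact graph-QMF kernels cannot be
(nonconstant) polynomials. -/
theorem graphQMF_not_polynomial (h : Polynomial ℝ)
    (hqmf : ∀ lam : ℝ, (h.eval lam) ^ 2 + (h.eval (2 - lam)) ^ 2 = 2) :
    ∃ c : ℝ, h = Polynomial.C c ∧ c ^ 2 = 1 := by
  have hbound : ∀ lam : ℝ, ‖h.eval lam‖ ≤ 2 := by
    intro lam
    have := hqmf lam
    have h2 : (h.eval lam) ^ 2 ≤ 2 := by nlinarith [sq_nonneg (h.eval (2 - lam))]
    rw [Real.norm_eq_abs]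
    nlinarith [abs_nonneg (h.eval lam), sq_abs (h.eval lam)]
  have hdeg : ¬ 0 < h.degree := by
    intro hd
    have := h.tendsto_norm_atTop hd (z := fun x : ℝ => x)
      (by simpa using Filter.tendsto_abs_atTop_atTop)
    obtain ⟨x, hx⟩ := (this.eventually_gt_atTop 2).exists
    exact absurd (hbound x) (not_le.mpr hx)
  have hc : h = Polynomial.C (h.coeff 0) := Polynomial.eq_C_of_degree_le_zero (le_of_not_gt hdeg)
  refine ⟨h.coeff 0, hc, ?_⟩
  have := hqmf 1
  rw [hc] at this
  simp at this
  nlinarith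
end
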